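/- (Hoeffding–Azuma MGF bound) Let (ξ_n)_{n≥1} be a sequence of martingale differences with respect to a filtration (F_n) (i.e., ξ_n is F_n-measurable and E[ξ_n | F_{n−1}] = 0 a.s.) and suppose |ξ_n| ≤ d_n almost surely for positive constants d_n. Then for every natural number n and every λ ∈ ℝ, E exp(λ ∑_{i=1}^n ξ_i) ≤ exp(λ² ∑_{i=1}^n d_i² / 2); equivalently, τ_{φ_2}(∑_{i=1}^n ξ_i) ≤ (∑_{i=1}^n d_i²)^{1/2}. -/

import Mathlib

open MeasureTheory Real

/-- `φ_2(x) = x²/2`. -/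
noncomputable def phi2 (x : ℝ) : ℝ := x ^ 2 / 2

/-- The set of admissible constants in the definition of the `φ`-subgaussian standard:
`{a ≥ 0 : ∀ λ, ln E exp(λξ) ≤ φ(aλ)}` (the exponentiated form of the inequality also
encodes finiteness of `E exp(λξ)`). -/
def subSet {Ω : Type*} [MeasurableSpace Ω] (μ : Measure Ω) (φ : ℝ → ℝ) (ξ : Ω → ℝ) :
    Set ℝ :=
  {a | 0 ≤ a ∧ ∀ l : ℝ,
    ∫⁻ ω, ENNReal.ofReal (Real.exp (l * ξ ω)) ∂μ ≤ ENNReal.ofReal (Real.exp (φ (a * l)))}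

/-- The `φ`-subgaussian standard (norm) `τ_φ(ξ)`. -/
noncomputable def tau {Ω : Type*} [MeasurableSpace Ω] (μ : Measure Ω) (φ : ℝ → ℝ)
    (ξ : Ω → ℝ) : ℝ :=
  sInf (subSet μ φ ξ)


/-!
Azuma's argument. For `|x| ≤ D`, convexity of `exp` bounds `exp (t x)` by the affine function
`cosh (t D) + sinh (t D) / D * x` of `x`. Multiplying by the `ℱ n`-measurable weight
`exp (t Sₙ)` and integrating, the affine term vanishes because `E[ξₙ₊₁ | ℱ n] = 0`, and
`cosh (t D) ≤ exp (t² D² / 2)`; induction on `n` gives the mgf bound, which says precisely that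
`(∑ dᵢ²)^{1/2}` lies in the set whose infimum is `τ_{φ₂}`.
-/

theorem Real.exp_mul_le_cosh_add_sinh_div_mul {t x D : ℝ} (hx : |x| ≤ D) :
    exp (t * x) ≤ cosh (t * D) + sinh (t * D) / D * x := by
  obtain rfl | hD := (abs_nonneg x |>.trans hx).eq_or_lt
  · simp [abs_nonpos_iff.mp hx]
  obtain ⟨hxl, hxu⟩ := abs_le.mp hx
  have ha : 0 ≤ (D + x) / (2 * D) := div_nonneg (by linarith) (by positivity)
  have hb : 0 ≤ (D - x) / (2 * D) := div_nonneg (by linarith) (by positivity)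
  -- `t x` is the convex combination of `± t D` with weights `(D ± x) / 2D`.
  have h := convexOn_exp.2 (Set.mem_univ (t * D)) (Set.mem_univ (-(t * D))) ha hb
    (by field_simp; ring)
  have hcomb : (D + x) / (2 * D) * (t * D) + (D - x) / (2 * D) * -(t * D) = t * x := by
    field_simp; ring
  simp only [smul_eq_mul, hcomb] at h
  refine h.trans_eq ?_
  rw [cosh_eq, sinh_eq]; field_simp; ring

section ConditionalHoeffding

variable {Ω : Type*} {m m0 : MeasurableSpace Ω} {μ : Measure Ω} {f g : Ω → ℝ}

theorem MeasureTheory.integral_mul_eq_zero_of_condExp_eq_zero (hm : m ≤ m0)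
    [SigmaFinite (μ.trim hm)] (hf : StronglyMeasurable[m] f) (hfg : Integrable (f * g) μ)
    (hg : Integrable g μ) (hg_zero : μ[g | m] =ᵐ[μ] 0) :
    ∫ ω, f ω * g ω ∂μ = 0 := by
  have hfg_zero : μ[f * g | m] =ᵐ[μ] 0 := by
    filter_upwards [condExp_mul_of_stronglyMeasurable_left hf hfg hg, hg_zero] with ω h h0
    simp [h, h0]
  rw [← Pi.mul_def, ← integral_condExp hm, integral_congr_ae hfg_zero]
  simp

theorem MeasureTheory.Integrable.mul_exp_mul_of_abs_le {D : ℝ} (t : ℝ) (hf : Integrable f μ)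
    (hg : AEStronglyMeasurable g μ) (hgD : ∀ᵐ ω ∂μ, |g ω| ≤ D) :
    Integrable (fun ω => f ω * exp (t * g ω)) μ := by
  refine hf.mul_bdd (continuous_exp.comp_aestronglyMeasurable (hg.const_mul t))
    (c := exp (|t| * D)) ?_
  filter_upwards [hgD] with ω hω
  rw [norm_of_nonneg (exp_nonneg _), exp_le_exp]
  exact (le_abs_self _).trans (abs_mul t _ ▸ mul_le_mul_of_nonneg_left hω (abs_nonneg t))

theorem MeasureTheory.integral_mul_exp_mul_le_of_condExp_eq_zero [IsFiniteMeasure μ]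
    (hm : m ≤ m0) {D : ℝ} (t : ℝ) (hf : StronglyMeasurable[m] f) (hf_nonneg : 0 ≤ f)
    (hf_int : Integrable f μ) (hg : AEStronglyMeasurable g μ) (hgD : ∀ᵐ ω ∂μ, |g ω| ≤ D)
    (hg_zero : μ[g | m] =ᵐ[μ] 0) :
    ∫ ω, f ω * exp (t * g ω) ∂μ ≤ exp (t ^ 2 * D ^ 2 / 2) * ∫ ω, f ω ∂μ := by
  have hg_int : Integrable g μ := .of_bound hg D (by simpa using hgD)
  have hfg_int : Integrable (fun ω => f ω * g ω) μ := hf_int.mul_bdd hg (by simpa using hgD)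
  have hfg_zero := integral_mul_eq_zero_of_condExp_eq_zero hm hf hfg_int hg_int hg_zero
  calc ∫ ω, f ω * exp (t * g ω) ∂μ
      ≤ ∫ ω, cosh (t * D) * f ω + sinh (t * D) / D * (f ω * g ω) ∂μ := by
        refine integral_mono_ae (hf_int.mul_exp_mul_of_abs_le t hg hgD)
          ((hf_int.const_mul _).add (hfg_int.const_mul _)) ?_
        filter_upwards [hgD] with ω hω
        have := mul_le_mul_of_nonneg_left (exp_mul_le_cosh_add_sinh_div_mul (t := t) hω)
          (hf_nonneg ω)
        linarith
    _ = cosh (t * D) * ∫ ω, f ω ∂μ := by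
        rw [integral_add (hf_int.const_mul _) (hfg_int.const_mul _), integral_const_mul,
          integral_const_mul, hfg_zero, mul_zero, add_zero]
    _ ≤ exp (t ^ 2 * D ^ 2 / 2) * ∫ ω, f ω ∂μ := by
        rw [← mul_pow]
        gcongr
        · exact integral_nonneg hf_nonneg
        · exact cosh_le_exp_half_sq _

end ConditionalHoeffding

theorem tau_phi2_le_sqrt {Ω : Type*} [MeasurableSpace Ω] {μ : Measure Ω} {X : Ω → ℝ} {c : ℝ}
    (hc : 0 ≤ c)
    (hX : ∀ l : ℝ,
      ∫⁻ ω, ENNReal.ofReal (exp (l * X ω)) ∂μ ≤ ENNReal.ofReal (exp (l ^ 2 * c / 2))) :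
    tau μ phi2 X ≤ sqrt c := by
  refine csInf_le ⟨0, fun a ha => ha.1⟩ ⟨sqrt_nonneg c, fun l => ?_⟩
  have hphi : phi2 (sqrt c * l) = l ^ 2 * c / 2 := by
    rw [phi2, mul_pow, sq_sqrt hc]; ring
  exact hphi ▸ hX l

section MartingaleDifference

variable {Ω : Type*} {m0 : MeasurableSpace Ω} {μ : Measure Ω} {ℱ : Filtration ℕ m0}
  {ξ : ℕ → Ω → ℝ}

theorem stronglyMeasurable_sum_Icc_one (hadp : ∀ n, 1 ≤ n → StronglyMeasurable[ℱ n] (ξ n))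
    (n : ℕ) : StronglyMeasurable[ℱ n] (fun ω => ∑ i ∈ Finset.Icc 1 n, ξ i ω) :=
  Finset.stronglyMeasurable_fun_sum _ fun i hi =>
    (hadp i (Finset.mem_Icc.mp hi).1).mono (ℱ.mono (Finset.mem_Icc.mp hi).2)

theorem integrable_exp_mul_sum_Icc_one_and_integral_le [IsProbabilityMeasure μ]
    (hadp : ∀ n, 1 ≤ n → StronglyMeasurable[ℱ n] (ξ n))
    (hmd : ∀ n, 1 ≤ n → μ[ξ n | ℱ (n - 1)] =ᵐ[μ] 0)
    {d : ℕ → ℝ} (hbdd : ∀ n, 1 ≤ n → ∀ᵐ ω ∂μ, |ξ n ω| ≤ d n) (l : ℝ) (n : ℕ) :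
    Integrable (fun ω => exp (l * ∑ i ∈ Finset.Icc 1 n, ξ i ω)) μ ∧
      ∫ ω, exp (l * ∑ i ∈ Finset.Icc 1 n, ξ i ω) ∂μ ≤
        exp (l ^ 2 * (∑ i ∈ Finset.Icc 1 n, d i ^ 2) / 2) := by
  induction n with
  | zero => simp
  | succ n ih =>
    obtain ⟨hf_int, hf_le⟩ := ih
    have hg : AEStronglyMeasurable (ξ (n + 1)) μ :=
      ((hadp (n + 1) n.succ_pos).mono (ℱ.le (n + 1))).aestronglyMeasurable
    have hf : StronglyMeasurable[ℱ n] (fun ω => exp (l * ∑ i ∈ Finset.Icc 1 n, ξ i ω)) :=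
      continuous_exp.comp_stronglyMeasurable
        ((stronglyMeasurable_sum_Icc_one hadp n).const_mul l)
    have hg_zero : μ[ξ (n + 1) | ℱ n] =ᵐ[μ] 0 := by simpa using hmd (n + 1) n.succ_pos
    have hsplit : ∀ ω, exp (l * ∑ i ∈ Finset.Icc 1 (n + 1), ξ i ω)
        = exp (l * ∑ i ∈ Finset.Icc 1 n, ξ i ω) * exp (l * ξ (n + 1) ω) := by
      intro ω
      rw [Finset.sum_Icc_succ_top n.succ_pos, mul_add, exp_add]
    simp only [hsplit]
    refine ⟨hf_int.mul_exp_mul_of_abs_le l hg (hbdd (n + 1) n.succ_pos), ?_⟩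
    calc ∫ ω, exp (l * ∑ i ∈ Finset.Icc 1 n, ξ i ω) * exp (l * ξ (n + 1) ω) ∂μ
        ≤ exp (l ^ 2 * d (n + 1) ^ 2 / 2) * ∫ ω, exp (l * ∑ i ∈ Finset.Icc 1 n, ξ i ω) ∂μ :=
          integral_mul_exp_mul_le_of_condExp_eq_zero (ℱ.le n) l hf (fun _ => (exp_pos _).le)
            hf_int hg (hbdd (n + 1) n.succ_pos) hg_zero
      _ ≤ exp (l ^ 2 * d (n + 1) ^ 2 / 2) *
            exp (l ^ 2 * (∑ i ∈ Finset.Icc 1 n, d i ^ 2) / 2) := by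
          gcongr
      _ = exp (l ^ 2 * (∑ i ∈ Finset.Icc 1 (n + 1), d i ^ 2) / 2) := by
          rw [← exp_add, Finset.sum_Icc_succ_top n.succ_pos]; ring_nf

end MartingaleDifference

theorem hoeffding_azuma_mgf_bound_general
    {Ω : Type*} {m0 : MeasurableSpace Ω} (μ : Measure Ω) [IsProbabilityMeasure μ]
    (ℱ : Filtration ℕ m0)
    (ξ : ℕ → Ω → ℝ)
    (hadp : ∀ n : ℕ, 1 ≤ n → StronglyMeasurable[ℱ n] (ξ n))
    (hmd : ∀ n : ℕ, 1 ≤ n → μ[ξ n | ℱ (n - 1)] =ᵐ[μ] 0)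
    (d : ℕ → ℝ)
    (hbdd : ∀ n : ℕ, 1 ≤ n → ∀ᵐ ω ∂μ, |ξ n ω| ≤ d n) :
    ∀ n : ℕ, 1 ≤ n →
      (∀ l : ℝ,
        ∫⁻ ω, ENNReal.ofReal (Real.exp (l * ∑ i ∈ Finset.Icc 1 n, ξ i ω)) ∂μ ≤
          ENNReal.ofReal (Real.exp (l ^ 2 * (∑ i ∈ Finset.Icc 1 n, d i ^ 2) / 2))) ∧
      tau μ phi2 (fun ω => ∑ i ∈ Finset.Icc 1 n, ξ i ω) ≤
        Real.sqrt (∑ i ∈ Finset.Icc 1 n, d i ^ 2) := by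
  intro n _
  have hmgf : ∀ l : ℝ,
      ∫⁻ ω, ENNReal.ofReal (exp (l * ∑ i ∈ Finset.Icc 1 n, ξ i ω)) ∂μ ≤
        ENNReal.ofReal (exp (l ^ 2 * (∑ i ∈ Finset.Icc 1 n, d i ^ 2) / 2)) := by
    intro l
    obtain ⟨h_int, h_le⟩ :=
      integrable_exp_mul_sum_Icc_one_and_integral_le hadp hmd hbdd l n
    rw [← ofReal_integral_eq_lintegral_ofReal h_int (.of_forall fun _ => (exp_pos _).le)]
    exact ENNReal.ofReal_le_ofReal h_le
  exact ⟨hmgf, tau_phi2_le_sqrt (Finset.sum_nonneg fun i _ => sq_nonneg (d i)) hmgf⟩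

/-- Hoeffding–Azuma MGF bound: if `(ξ_n)` is a sequence of martingale differences with
respect to a filtration `(F_n)` with `|ξ_n| ≤ d_n` a.s., then for every `n` and `λ`,
`E exp(λ ∑_{i=1}^n ξ_i) ≤ exp(λ² ∑_{i=1}^n d_i²/2)` (stated in exponentiated/lintegral
form); equivalently, `τ_{φ_2}(∑_{i=1}^n ξ_i) ≤ (∑_{i=1}^n d_i²)^{1/2}`. -/
theorem hoeffding_azuma_mgf_bound
    {Ω : Type*} {m0 : MeasurableSpace Ω} (μ : Measure Ω) [IsProbabilityMeasure μ]
    (ℱ : Filtration ℕ m0)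
    (ξ : ℕ → Ω → ℝ)
    (hadp : ∀ n : ℕ, 1 ≤ n → StronglyMeasurable[ℱ n] (ξ n))
    (hint : ∀ n : ℕ, Integrable (ξ n) μ)
    (hmd : ∀ n : ℕ, 1 ≤ n → μ[ξ n | ℱ (n - 1)] =ᵐ[μ] 0)
    (d : ℕ → ℝ) (hd : ∀ n, 0 < d n)
    (hbdd : ∀ n : ℕ, 1 ≤ n → ∀ᵐ ω ∂μ, |ξ n ω| ≤ d n) :
    ∀ n : ℕ, 1 ≤ n →
      (∀ l : ℝ,
        ∫⁻ ω, ENNReal.ofReal (Real.exp (l * ∑ i ∈ Finset.Icc 1 n, ξ i ω)) ∂μ ≤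
          ENNReal.ofReal (Real.exp (l ^ 2 * (∑ i ∈ Finset.Icc 1 n, d i ^ 2) / 2))) ∧
      tau μ phi2 (fun ω => ∑ i ∈ Finset.Icc 1 n, ξ i ω) ≤
        Real.sqrt (∑ i ∈ Finset.Icc 1 n, d i ^ 2) :=
  hoeffding_azuma_mgf_bound_general μ ℱ ξ hadp hmd d hbdd
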